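/- arXiv:1812.02851 — 5 statements merged into one kernel-verified Lean document; each statement's English description precedes it below -/
import Mathlib

section
/- Let F : ℂⁿ → ℂ be the evaluation map of a multivariate polynomial with complex coefficients of total degree D, let ẑ ∈ ℂⁿ and δ > 0. If |F(ẑ)| − Σ_{k=1}^{D} (‖DᵏF(ẑ)‖/k!)·δᵏ > 0, then F(z) ≠ 0 for every z ∈ ℂⁿ with ‖z − ẑ‖ < δ. (Proposition: Taylor-residual exclusion test.) -/
/-!
A polynomial `F` of total degree `D` is a finite sum of diagonals of multilinear maps of arity at
most `D`, so it has a finite power series of order `D + 1` about every point, and the terms of that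
series at `ẑ` are `DᵏF(ẑ)(y, …, y)/k!`. Hence `F` equals its Taylor polynomial of order `D`, and
`‖F z - F ẑ‖ ≤ ∑_{k=1}^{D} ‖DᵏF(ẑ)‖/k! · δᵏ < ‖F ẑ‖` on the ball.
-/

open MvPolynomial

section

variable {𝕜 : Type*} [NontriviallyNormedField 𝕜]
  {E : Type*} [NormedAddCommGroup E] [NormedSpace 𝕜 E]
  {F : Type*} [NormedAddCommGroup F] [NormedSpace 𝕜 F]

theorem ContinuousMultilinearMap.exists_hasFiniteFPowerSeriesOnBall_diag {ι : Type*} [Fintype ι]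
    (M : ContinuousMultilinearMap 𝕜 (fun _ : ι ↦ E) F) :
    ∃ q : FormalMultilinearSeries 𝕜 E F,
      HasFiniteFPowerSeriesOnBall (fun z ↦ M fun _ ↦ z) q 0 (Fintype.card ι + 1) ⊤ := by
  refine ⟨fun k ↦ if h : Fintype.card ι = k then
    M.domDomCongr (Fintype.equivFinOfCardEq h) else 0, .mk' (fun k hk ↦ dif_neg (by omega))
    ENNReal.zero_lt_top fun y _ ↦ ?_⟩
  rw [Finset.sum_eq_single_of_mem _ (Finset.self_mem_range_succ _) fun k _ hk ↦ by
    rw [dif_neg (Ne.symm hk)]; rfl, dif_pos rfl, zero_add]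
  rfl

theorem exists_hasFiniteFPowerSeriesOnBall_finset_sum {ι : Type*} (s : Finset ι) {f : ι → E → F}
    {x : E} {n : ℕ} {r : ENNReal} (hr : 0 < r)
    (hf : ∀ i ∈ s, ∃ q : FormalMultilinearSeries 𝕜 E F, HasFiniteFPowerSeriesOnBall (f i) q x n r) :
    ∃ q : FormalMultilinearSeries 𝕜 E F,
      HasFiniteFPowerSeriesOnBall (fun z ↦ ∑ i ∈ s, f i z) q x n r := by
  classical
  induction s using Finset.induction_on with
  | empty => exact ⟨0, .mk' (fun _ _ ↦ rfl) hr fun _ _ ↦ by simp⟩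
  | insert a s ha ih =>
    obtain ⟨qa, hqa⟩ := hf a (Finset.mem_insert_self a s)
    obtain ⟨qs, hqs⟩ := ih fun i hi ↦ hf i (Finset.mem_insert_of_mem hi)
    refine ⟨qa + qs, ?_⟩
    simpa only [Finset.sum_insert ha, Pi.add_def, max_self] using hqa.add hqs

theorem MvPolynomial.exists_hasFiniteFPowerSeriesOnBall_eval {σ : Type*}
    (ℓ : σ → E →L[𝕜] 𝕜) (P : MvPolynomial σ 𝕜) :
    ∃ q : FormalMultilinearSeries 𝕜 E 𝕜, HasFiniteFPowerSeriesOnBall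
      (fun z ↦ eval (fun i ↦ ℓ i z) P) q 0 (P.totalDegree + 1) ⊤ := by
  have hsum : (fun z ↦ eval (fun i ↦ ℓ i z) P) =
      fun z ↦ ∑ m ∈ P.support, eval (fun i ↦ ℓ i z) (monomial m (coeff m P)) := by
    ext z
    conv_lhs => rw [P.as_sum, map_sum]
  rw [hsum]
  refine exists_hasFiniteFPowerSeriesOnBall_finset_sum _ ENNReal.zero_lt_top fun m hm ↦ ?_
  -- the monomial `z ↦ ∏ᵢ (ℓᵢ z)^(mᵢ)` is the diagonal of a product of `|m|` linear forms
  let M : ContinuousMultilinearMap 𝕜 (fun _ : Σ i : m.support, Fin (m i) ↦ E) 𝕜 := coeff m P •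
    (ContinuousMultilinearMap.mkPiAlgebra 𝕜 _ 𝕜).compContinuousLinearMap fun j ↦ ℓ j.1
  have hM : ∀ z, M (fun _ ↦ z) = eval (fun i ↦ ℓ i z) (monomial m (coeff m P)) := by
    intro z
    rw [eval_monomial, Finsupp.prod, ← Finset.prod_coe_sort m.support fun i ↦ ℓ i z ^ m i]
    simp [M, Fintype.prod_sigma]
  have hcard : Fintype.card (Σ i : m.support, Fin (m i)) = m.sum fun _ e ↦ e := by
    simp [Finsupp.sum, Finset.sum_attach]
  obtain ⟨q, hq⟩ := M.exists_hasFiniteFPowerSeriesOnBall_diag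
  refine ⟨q, ?_⟩
  rw [hcard] at hq
  simpa only [hM] using hq.of_le (by have := le_totalDegree hm; omega)

open Nat in
theorem HasFiniteFPowerSeriesOnBall.eq_sum_iteratedFDeriv [CharZero 𝕜] [CompleteSpace F]
    {f : E → F} {p : FormalMultilinearSeries 𝕜 E F} {x y : E} {n : ℕ} {r : ENNReal}
    (hf : HasFiniteFPowerSeriesOnBall f p x n r) (hy : y ∈ Metric.eball 0 r) :
    f (x + y) = ∑ k ∈ Finset.range n, (k ! : 𝕜)⁻¹ • iteratedFDeriv 𝕜 k f x fun _ ↦ y := by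
  refine (hf.toHasFPowerSeriesOnBall.hasSum_iteratedFDeriv hy).unique
    (hasSum_sum_of_ne_finset_zero fun k hk ↦ ?_)
  rw [Finset.mem_range, not_lt] at hk
  rw [← hf.toHasFPowerSeriesOnBall.factorial_smul, hf.finite k hk]
  simp

end

open Nat in
theorem HasFiniteFPowerSeriesOnBall.norm_sub_le_sum_iteratedFDeriv
    {𝕜 : Type*} [RCLike 𝕜] {E : Type*} [NormedAddCommGroup E] [NormedSpace 𝕜 E]
    {F : Type*} [NormedAddCommGroup F] [NormedSpace 𝕜 F] [CompleteSpace F]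
    {f : E → F} {p : FormalMultilinearSeries 𝕜 E F} {x y : E} {D : ℕ} {r : ENNReal} {ρ : ℝ}
    (hf : HasFiniteFPowerSeriesOnBall f p x (D + 1) r) (hy : y ∈ Metric.eball 0 r)
    (hyρ : ‖y‖ ≤ ρ) :
    ‖f (x + y) - f x‖ ≤ ∑ k ∈ Finset.Icc 1 D, ‖iteratedFDeriv 𝕜 k f x‖ / k ! * ρ ^ k := by
  have hsplit : Finset.range (D + 1) = insert 0 (Finset.Icc 1 D) := by
    ext k
    simp only [Finset.mem_range, Finset.mem_insert, Finset.mem_Icc]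
    omega
  rw [hf.eq_sum_iteratedFDeriv hy, hsplit, Finset.sum_insert (by simp)]
  simp only [factorial_zero, cast_one, inv_one, one_smul, iteratedFDeriv_zero_apply,
    add_sub_cancel_left]
  refine (norm_sum_le _ _).trans (Finset.sum_le_sum fun k _ ↦ ?_)
  rw [norm_smul, norm_inv, RCLike.norm_natCast, inv_mul_eq_div, div_mul_eq_mul_div]
  gcongr
  exact (iteratedFDeriv 𝕜 k f x).le_opNorm_mul_pow_of_le ((pi_norm_const_le y).trans hyρ)

theorem taylor_residual_exclusion_general (n : ℕ) (p : MvPolynomial (Fin n) ℂ)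
    (F : EuclideanSpace ℂ (Fin n) → ℂ)
    (hF : ∀ z : EuclideanSpace ℂ (Fin n), F z = MvPolynomial.eval (fun i => z i) p)
    (D : ℕ) (hD : p.totalDegree = D)
    (zhat : EuclideanSpace ℂ (Fin n)) (δ : ℝ)
    (hres : 0 < ‖F zhat‖ -
      ∑ k ∈ Finset.Icc 1 D, (‖iteratedFDeriv ℂ k F zhat‖ / (k.factorial : ℝ)) * δ ^ k) :
    ∀ z : EuclideanSpace ℂ (Fin n), ‖z - zhat‖ < δ → F z ≠ 0 := by
  obtain ⟨q, hq⟩ := p.exists_hasFiniteFPowerSeriesOnBall_eval fun i ↦ EuclideanSpace.proj i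
  have hFeq : (fun z ↦ eval (fun i ↦ EuclideanSpace.proj i z) p) = F := by
    funext z
    rw [hF]
    rfl
  rw [hFeq, hD] at hq
  have hq_zhat := hq.changeOrigin (y := zhat) ENNReal.coe_lt_top
  rw [zero_add, ENNReal.top_sub_coe] at hq_zhat
  intro z hz hFz
  have htaylor := hq_zhat.norm_sub_le_sum_iteratedFDeriv (y := z - zhat)
    (by simp only [Metric.eball_top, Set.mem_univ]) hz.le
  rw [add_sub_cancel, hFz, zero_sub, norm_neg] at htaylor
  linarith

/-- **Taylor-residual exclusion test.**
If `F` is the evaluation map of a multivariate polynomial of total degree `D`,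
and the Taylor residual of `F` at `zhat` with radius `δ` is positive, then `F`
does not vanish on the open ball of radius `δ` about `zhat`. -/
theorem taylor_residual_exclusion (n : ℕ) (p : MvPolynomial (Fin n) ℂ)
    (F : EuclideanSpace ℂ (Fin n) → ℂ)
    (hF : ∀ z : EuclideanSpace ℂ (Fin n), F z = MvPolynomial.eval (fun i => z i) p)
    (D : ℕ) (hD : p.totalDegree = D)
    (zhat : EuclideanSpace ℂ (Fin n)) (δ : ℝ) (hδ : 0 < δ)
    (hres : 0 < ‖F zhat‖ -
      ∑ k ∈ Finset.Icc 1 D, (‖iteratedFDeriv ℂ k F zhat‖ / (k.factorial : ℝ)) * δ ^ k) :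
    ∀ z : EuclideanSpace ℂ (Fin n), ‖z - zhat‖ < δ → F z ≠ 0 :=
  taylor_residual_exclusion_general n p F hF D hD zhat δ hres
end

section
/- (Kantorovich-type criterion.) Let g : ℂⁿ → ℂⁿ be differentiable on a convex open set D₀ containing ẑ, and suppose there are positive reals B, K, η such that: Dg(ẑ) is invertible with ‖Dg(ẑ)⁻¹‖ ≤ B; ‖Dg(ẑ)⁻¹ g(ẑ)‖ ≤ η; ‖Dg(x) − Dg(y)‖ ≤ K‖x − y‖ for all x, y ∈ D₀; BKη ≤ 1/2; and the closed ball of radius 2η about ẑ is contained in D₀. Then all Newton iterates N_g^k(ẑ) are defined, remain in the closed ball of radius 2η about ẑ, and converge to a point ζ with g(ζ) = 0 and ‖ζ − ẑ‖ ≤ 2η. -/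
/-!
If at `x` the inverse Jacobian has norm at most `β`, the Newton step has length at most `δ` and
`βKδ ≤ 1/2`, then at the next iterate `y` the Banach perturbation lemma
(`‖Dg(x)⁻¹‖ ‖Dg(y) - Dg(x)‖ ≤ βKδ ≤ 1/2`) gives `‖Dg(y)⁻¹‖ ≤ 2β`, while the second order Taylor
bound `‖g(y)‖ ≤ K/2 ‖y - x‖²` gives a Newton step of length at most `2β · Kδ²/2 ≤ δ/2`.
So `βKδ` is preserved, the step lengths are bounded by `η/2ᵏ`, the iterates stay in the ball of
radius `2η = η(1 + 1/2 + 1/4 + ⋯)` and form a Cauchy sequence, and since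
`‖g(zₖ₊₁)‖ ≤ K/2 ‖zₖ₊₁ - zₖ‖²` the limit is a zero of `g`.
-/

open Filter Topology

/-- The Newton operator `N_g(z) = z − Dg(z)⁻¹ g(z)` of a map `g : ℂⁿ → ℂⁿ`, written with
`ContinuousLinearMap.inverse` (which is the inverse where the Jacobian is invertible,
and the zero map elsewhere). -/
noncomputable def newtonMap {n : ℕ} (g : EuclideanSpace ℂ (Fin n) → EuclideanSpace ℂ (Fin n))
    (z : EuclideanSpace ℂ (Fin n)) : EuclideanSpace ℂ (Fin n) :=
  z - (fderiv ℂ g z).inverse (g z)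

/-- The Jacobian of `g` at `z` is invertible, i.e. it is a continuous linear isomorphism. -/
def jacobianInvertible {n : ℕ} (g : EuclideanSpace ℂ (Fin n) → EuclideanSpace ℂ (Fin n))
    (z : EuclideanSpace ℂ (Fin n)) : Prop :=
  ∃ e : EuclideanSpace ℂ (Fin n) ≃L[ℂ] EuclideanSpace ℂ (Fin n),
    (e : EuclideanSpace ℂ (Fin n) →L[ℂ] EuclideanSpace ℂ (Fin n)) = fderiv ℂ g z

open Set Metric
open scoped Ring

section NormedRing

variable {R : Type*} [NormedRing R] [HasSummableGeomSeries R]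

theorem norm_ringInverse_one_sub_le (h1 : ‖(1 : R)‖ ≤ 1) {t : R} (ht : ‖t‖ < 1) :
    ‖(1 - t)⁻¹ʳ‖ ≤ (1 - ‖t‖)⁻¹ := by
  rw [← geom_series_eq_inverse t ht]
  linarith [tsum_geometric_le_of_norm_lt_one t ht]

theorem IsUnit.isUnit_and_norm_ringInverse_le (h1 : ‖(1 : R)‖ ≤ 1) {a b : R} (ha : IsUnit a)
    (hab : ‖a⁻¹ʳ‖ * ‖b - a‖ < 1) :
    IsUnit b ∧ ‖b⁻¹ʳ‖ ≤ ‖a⁻¹ʳ‖ / (1 - ‖a⁻¹ʳ‖ * ‖b - a‖) := by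
  obtain ⟨u, rfl⟩ := ha
  rw [Ring.inverse_unit] at hab ⊢
  set t : R := ↑u⁻¹ * (↑u - b)
  have ht : ‖t‖ ≤ ‖(↑u⁻¹ : R)‖ * ‖b - ↑u‖ := norm_sub_rev (u : R) b ▸ norm_mul_le _ _
  have ht1 : ‖t‖ < 1 := ht.trans_lt hab
  have hb : b = ↑(u * Units.oneSub t ht1) := by simp [t, mul_sub, ← mul_assoc]
  have hinv : b⁻¹ʳ = (1 - t)⁻¹ʳ * ↑u⁻¹ := by
    rw [hb, Ring.inverse_unit, mul_inv_rev, Units.val_mul, NormedRing.inverse_one_sub t ht1]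
  refine ⟨hb ▸ Units.isUnit _, ?_⟩
  rw [hinv, div_eq_inv_mul]
  calc ‖(1 - t)⁻¹ʳ * ↑u⁻¹‖ ≤ ‖(1 - t)⁻¹ʳ‖ * ‖(↑u⁻¹ : R)‖ := norm_mul_le _ _
    _ ≤ (1 - ‖t‖)⁻¹ * ‖(↑u⁻¹ : R)‖ := by gcongr; exact norm_ringInverse_one_sub_le h1 ht1
    _ ≤ (1 - ‖(↑u⁻¹ : R)‖ * ‖b - ↑u‖)⁻¹ * ‖(↑u⁻¹ : R)‖ := by gcongr

end NormedRing

namespace ContinuousLinearMap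

theorem isUnit_iff_isInvertible {R M : Type*} [Ring R] [TopologicalSpace M] [AddCommGroup M]
    [Module R M] [IsTopologicalAddGroup M] [ContinuousConstSMul R M] {A : M →L[R] M} :
    IsUnit A ↔ A.IsInvertible :=
  ⟨fun ⟨u, hu⟩ ↦ ⟨ContinuousLinearEquiv.unitsEquiv R M u, hu⟩,
    fun ⟨e, he⟩ ↦ ⟨(ContinuousLinearEquiv.unitsEquiv R M).symm e, he⟩⟩

theorem IsInvertible.isInvertible_and_norm_inverse_le {𝕜 E : Type*} [NontriviallyNormedField 𝕜]
    [NormedAddCommGroup E] [NormedSpace 𝕜 E] [CompleteSpace E] {A B : E →L[𝕜] E}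
    (hA : A.IsInvertible) (hAB : ‖A.inverse‖ * ‖B - A‖ < 1) :
    B.IsInvertible ∧ ‖B.inverse‖ ≤ ‖A.inverse‖ / (1 - ‖A.inverse‖ * ‖B - A‖) := by
  simp only [← isUnit_iff_isInvertible, ← ringInverse_eq_inverse] at hA hAB ⊢
  exact hA.isUnit_and_norm_ringInverse_le norm_id_le hAB

end ContinuousLinearMap

variable {𝕜 E : Type*} [NontriviallyNormedField 𝕜] [NormedAddCommGroup E] [NormedSpace 𝕜 E]

variable (𝕜) in
noncomputable def newtonStep (g : E → E) (x : E) : E :=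
  x - (fderiv 𝕜 g x).inverse (g x)

theorem norm_newtonStep_sub (g : E → E) (x : E) :
    ‖newtonStep 𝕜 g x - x‖ = ‖(fderiv 𝕜 g x).inverse (g x)‖ := by
  rw [newtonStep, sub_sub_cancel_left, norm_neg]

variable (𝕜) in
structure NewtonBounds (g : E → E) (β δ : ℝ) (x : E) : Prop where
  isInvertible : (fderiv 𝕜 g x).IsInvertible
  norm_inverse_le : ‖(fderiv 𝕜 g x).inverse‖ ≤ β
  norm_inverse_apply_le : ‖(fderiv 𝕜 g x).inverse (g x)‖ ≤ δ

variable [NormedAlgebra ℝ 𝕜] [NormedSpace ℝ E] [IsScalarTower ℝ 𝕜 E]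

theorem Convex.norm_image_sub_sub_le_of_hasFDerivWithin_lipschitz {F : Type*}
    [NormedAddCommGroup F] [NormedSpace 𝕜 F] [NormedSpace ℝ F] [IsScalarTower ℝ 𝕜 F]
    {f : E → F} {f' : E → E →L[𝕜] F} {s : Set E} {x y : E} {K : ℝ} (hs : Convex ℝ s)
    (hf : ∀ z ∈ s, HasFDerivWithinAt f (f' z) s z) (hK : ∀ z ∈ s, ‖f' z - f' x‖ ≤ K * ‖z - x‖)
    (hx : x ∈ s) (hy : y ∈ s) : ‖f y - f x - f' x (y - x)‖ ≤ K / 2 * ‖y - x‖ ^ 2 := by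
  set γ : ℝ → E := ⇑(AffineMap.lineMap (k := ℝ) x y)
  have segm : MapsTo γ (Icc 0 1) s := hs.mapsTo_lineMap hx hy
  have hD : ∀ t ∈ Icc (0 : ℝ) 1, HasDerivWithinAt (fun t ↦ f (γ t) - f x - t • f' x (y - x))
      (f' (γ t) (y - x) - f' x (y - x)) (Icc 0 1) t := fun t ht ↦ by
    have := ((hf _ (segm ht)).restrictScalars ℝ).comp_hasDerivWithinAt t
      AffineMap.hasDerivWithinAt_lineMap segm
    exact ((this.sub_const (f x)).sub
      ((hasDerivWithinAt_id t _).smul_const (f' x (y - x)))).congr_deriv (by simp)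
  have bound : ∀ t ∈ Ico (0 : ℝ) 1,
      ‖f' (γ t) (y - x) - f' x (y - x)‖ ≤ K * ‖y - x‖ ^ 2 * t := fun t ht ↦ by
    have hγ : γ t - x = t • (y - x) := AffineMap.lineMap_vsub_left x y t
    calc ‖f' (γ t) (y - x) - f' x (y - x)‖ = ‖(f' (γ t) - f' x) (y - x)‖ := rfl
      _ ≤ ‖f' (γ t) - f' x‖ * ‖y - x‖ := ContinuousLinearMap.le_opNorm _ _
      _ ≤ K * ‖γ t - x‖ * ‖y - x‖ := by
        gcongr; exact hK _ (segm (Ico_subset_Icc_self ht))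
      _ = K * ‖y - x‖ ^ 2 * t := by
        rw [hγ, norm_smul, Real.norm_of_nonneg ht.1]; ring
  have := image_norm_le_of_norm_deriv_right_le_deriv_boundary
    (fun t ht ↦ (hD t ht).continuousWithinAt)
    (fun t ht ↦ (hD t (Ico_subset_Icc_self ht)).mono_of_mem_nhdsWithin (Icc_mem_nhdsGE_of_mem ht))
    (B := fun t ↦ K / 2 * ‖y - x‖ ^ 2 * t ^ 2) (by simp [γ])
    (fun t ↦ by
      simpa using ((hasDerivAt_pow 2 t).const_mul (K / 2 * ‖y - x‖ ^ 2)).congr_deriv (by ring))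
    bound (right_mem_Icc.2 zero_le_one)
  simpa [γ] using this

theorem norm_image_newtonStep_le {g : E → E} {s : Set E} {x : E} {K : ℝ} (hs : Convex ℝ s)
    (hdiff : ∀ z ∈ s, DifferentiableAt 𝕜 g z)
    (hK : ∀ z ∈ s, ‖fderiv 𝕜 g z - fderiv 𝕜 g x‖ ≤ K * ‖z - x‖)
    (hinv : (fderiv 𝕜 g x).IsInvertible) (hx : x ∈ s) (hy : newtonStep 𝕜 g x ∈ s) :
    ‖g (newtonStep 𝕜 g x)‖ ≤ K / 2 * ‖newtonStep 𝕜 g x - x‖ ^ 2 := by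
  have hlin : fderiv 𝕜 g x (newtonStep 𝕜 g x - x) = -g x := by
    rw [newtonStep, sub_sub_cancel_left, map_neg, hinv.self_apply_inverse]
  have := hs.norm_image_sub_sub_le_of_hasFDerivWithin_lipschitz
    (fun z hz ↦ (hdiff z hz).hasFDerivAt.hasFDerivWithinAt) hK hx hy
  rwa [hlin, sub_neg_eq_add, sub_add_cancel] at this

theorem NewtonBounds.step [CompleteSpace E] {g : E → E} {s : Set E} {x : E}
    {β δ K : ℝ} (h : NewtonBounds 𝕜 g β δ x) (hs : Convex ℝ s)
    (hdiff : ∀ z ∈ s, DifferentiableAt 𝕜 g z)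
    (hK : ∀ z ∈ s, ‖fderiv 𝕜 g z - fderiv 𝕜 g x‖ ≤ K * ‖z - x‖) (hK₀ : 0 ≤ K)
    (hβKδ : β * K * δ ≤ 1 / 2) (hx : x ∈ s) (hy : newtonStep 𝕜 g x ∈ s) :
    NewtonBounds 𝕜 g (2 * β) (δ / 2) (newtonStep 𝕜 g x) := by
  set y := newtonStep 𝕜 g x
  have hβ : 0 ≤ β := (norm_nonneg _).trans h.norm_inverse_le
  have hδ : 0 ≤ δ := (norm_nonneg _).trans h.norm_inverse_apply_le
  have hyx : ‖y - x‖ ≤ δ := (norm_newtonStep_sub g x).trans_le h.norm_inverse_apply_le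
  have hsmall : ‖(fderiv 𝕜 g x).inverse‖ * ‖fderiv 𝕜 g y - fderiv 𝕜 g x‖ ≤ 1 / 2 :=
    calc _ ≤ β * (K * δ) := by gcongr; exacts [h.norm_inverse_le, (hK y hy).trans (by gcongr)]
      _ ≤ 1 / 2 := by linarith
  obtain ⟨hinv, hnorm⟩ :=
    h.isInvertible.isInvertible_and_norm_inverse_le (hsmall.trans_lt one_half_lt_one)
  have hinv_le : ‖(fderiv 𝕜 g y).inverse‖ ≤ 2 * β := by
    refine hnorm.trans ?_
    rw [div_le_iff₀ (by linarith)]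
    nlinarith [h.norm_inverse_le, norm_nonneg (fderiv 𝕜 g y - fderiv 𝕜 g x)]
  have hgy : ‖g y‖ ≤ K / 2 * δ ^ 2 :=
    (norm_image_newtonStep_le hs hdiff hK h.isInvertible hx hy).trans (by gcongr)
  refine ⟨hinv, hinv_le, ?_⟩
  calc ‖(fderiv 𝕜 g y).inverse (g y)‖ ≤ ‖(fderiv 𝕜 g y).inverse‖ * ‖g y‖ :=
        ContinuousLinearMap.le_opNorm _ _
    _ ≤ 2 * β * (K / 2 * δ ^ 2) := by gcongr
    _ = β * K * δ * δ := by ring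
    _ ≤ 1 / 2 * δ := by gcongr
    _ = δ / 2 := by ring

theorem newtonBounds_iterate [CompleteSpace E] {g : E → E} {x₀ : E} {B K η : ℝ}
    (hdiff : ∀ z ∈ closedBall x₀ (2 * η), DifferentiableAt 𝕜 g z)
    (hLip : ∀ u ∈ closedBall x₀ (2 * η), ∀ v ∈ closedBall x₀ (2 * η),
      ‖fderiv 𝕜 g u - fderiv 𝕜 g v‖ ≤ K * ‖u - v‖)
    (hK : 0 ≤ K) (h₀ : NewtonBounds 𝕜 g B η x₀) (hBKη : B * K * η ≤ 1 / 2) (k : ℕ) :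
    NewtonBounds 𝕜 g (2 ^ k * B) (η / 2 ^ k) ((newtonStep 𝕜 g)^[k] x₀) ∧
      (newtonStep 𝕜 g)^[k] x₀ ∈ closedBall x₀ (2 * η - 2 * (η / 2 ^ k)) := by
  have hη : 0 ≤ η := (norm_nonneg _).trans h₀.norm_inverse_apply_le
  induction k with
  | zero => simpa using h₀
  | succ k ih =>
    obtain ⟨hk, hmem⟩ := ih
    set x := (newtonStep 𝕜 g)^[k] x₀
    have hx : x ∈ closedBall x₀ (2 * η) :=
      closedBall_subset_closedBall (by linarith [show 0 ≤ η / 2 ^ k by positivity]) hmem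
    have hy : newtonStep 𝕜 g x ∈ closedBall x₀ (2 * η - 2 * (η / 2 ^ (k + 1))) := by
      rw [mem_closedBall] at hmem ⊢
      have hstep : ‖newtonStep 𝕜 g x - x‖ ≤ η / 2 ^ k :=
        (norm_newtonStep_sub g x).trans_le hk.norm_inverse_apply_le
      calc dist (newtonStep 𝕜 g x) x₀ ≤ dist (newtonStep 𝕜 g x) x + dist x x₀ := dist_triangle ..
        _ ≤ η / 2 ^ k + (2 * η - 2 * (η / 2 ^ k)) := by rw [dist_eq_norm]; gcongr
        _ = 2 * η - 2 * (η / 2 ^ (k + 1)) := by ring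
    have hnext := hk.step (convex_closedBall x₀ (2 * η)) hdiff (fun z hz ↦ hLip z hz x hx) hK
      (by field_simp; linarith) hx
      (closedBall_subset_closedBall (by linarith [show 0 ≤ η / 2 ^ (k + 1) by positivity]) hy)
    rw [Function.iterate_succ_apply']
    refine ⟨?_, hy⟩
    convert hnext using 1 <;> ring

theorem image_eq_zero_of_tendsto_newtonStep_iterate {g : E → E} {s : Set E} {x₀ ζ : E} {K : ℝ}
    (hs : Convex ℝ s) (hdiff : ∀ z ∈ s, DifferentiableAt 𝕜 g z)
    (hLip : ∀ u ∈ s, ∀ v ∈ s, ‖fderiv 𝕜 g u - fderiv 𝕜 g v‖ ≤ K * ‖u - v‖)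
    (hmem : ∀ k, (newtonStep 𝕜 g)^[k] x₀ ∈ s)
    (hinv : ∀ k, (fderiv 𝕜 g ((newtonStep 𝕜 g)^[k] x₀)).IsInvertible)
    (hζ : Tendsto (fun k ↦ (newtonStep 𝕜 g)^[k] x₀) atTop (𝓝 ζ)) (hcont : ContinuousAt g ζ) :
    g ζ = 0 := by
  set z := fun k ↦ (newtonStep 𝕜 g)^[k] x₀
  have hsucc : ∀ k, z (k + 1) = newtonStep 𝕜 g (z k) := fun k ↦ Function.iterate_succ_apply' ..
  have hζ' : Tendsto (fun k ↦ z (k + 1)) atTop (𝓝 ζ) := hζ.comp (tendsto_add_atTop_nat 1)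
  have hbound : ∀ k, ‖g (z (k + 1))‖ ≤ K / 2 * ‖z (k + 1) - z k‖ ^ 2 := fun k ↦ by
    rw [hsucc]
    exact norm_image_newtonStep_le hs hdiff (fun u hu ↦ hLip u hu _ (hmem k)) (hinv k) (hmem k)
      (hsucc k ▸ hmem (k + 1))
  have hsmall : Tendsto (fun k ↦ K / 2 * ‖z (k + 1) - z k‖ ^ 2) atTop (𝓝 0) := by
    simpa using ((hζ'.sub hζ).norm.pow 2).const_mul (K / 2)
  exact tendsto_nhds_unique (hcont.tendsto.comp hζ') (squeeze_zero_norm hbound hsmall)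

theorem kantorovich_criterion_general (n : ℕ)
    (g : EuclideanSpace ℂ (Fin n) → EuclideanSpace ℂ (Fin n))
    (D₀ : Set (EuclideanSpace ℂ (Fin n)))
    (zhat : EuclideanSpace ℂ (Fin n))
    (B K η : ℝ) (hK : 0 < K)
    (hdiff : ∀ x ∈ D₀, DifferentiableAt ℂ g x)
    (hinv : jacobianInvertible g zhat)
    (hBbound : ‖(fderiv ℂ g zhat).inverse‖ ≤ B)
    (hηbound : ‖(fderiv ℂ g zhat).inverse (g zhat)‖ ≤ η)
    (hLip : ∀ x ∈ D₀, ∀ y ∈ D₀, ‖fderiv ℂ g x - fderiv ℂ g y‖ ≤ K * ‖x - y‖)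
    (hBKη : B * K * η ≤ 1 / 2)
    (hball : Metric.closedBall zhat (2 * η) ⊆ D₀) :
    (∀ k : ℕ, jacobianInvertible g ((newtonMap g)^[k] zhat)) ∧
    (∀ k : ℕ, (newtonMap g)^[k] zhat ∈ Metric.closedBall zhat (2 * η)) ∧
    ∃ ζ : EuclideanSpace ℂ (Fin n),
      Tendsto (fun k => (newtonMap g)^[k] zhat) atTop (𝓝 ζ) ∧
      g ζ = 0 ∧ ‖ζ - zhat‖ ≤ 2 * η := by
  have hN : newtonMap g = newtonStep ℂ g := rfl
  have hdiff' := fun z hz ↦ hdiff z (hball hz)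
  have hLip' := fun u hu v hv ↦ hLip u (hball hu) v (hball hv)
  have hbounds := newtonBounds_iterate hdiff' hLip' hK.le ⟨hinv, hBbound, hηbound⟩ hBKη
  have hη : 0 ≤ η := (norm_nonneg _).trans hηbound
  have hmem : ∀ k, (newtonMap g)^[k] zhat ∈ closedBall zhat (2 * η) := fun k ↦
    closedBall_subset_closedBall (by linarith [show 0 ≤ η / 2 ^ k by positivity]) (hbounds k).2
  have hstep : ∀ k,
      dist ((newtonMap g)^[k] zhat) ((newtonMap g)^[k + 1] zhat) ≤ 2 * η / 2 / 2 ^ k := fun k ↦ by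
    rw [dist_comm, dist_eq_norm, Function.iterate_succ_apply', hN, norm_newtonStep_sub]
    simpa using (hbounds k).1.norm_inverse_apply_le
  obtain ⟨ζ, hζ⟩ := cauchySeq_tendsto_of_complete (cauchySeq_of_le_geometric_two hstep)
  have hζmem : ζ ∈ closedBall zhat (2 * η) :=
    mem_closedBall'.2 (dist_le_of_le_geometric_two_of_tendsto₀ hstep hζ)
  refine ⟨fun k ↦ (hbounds k).1.isInvertible, hmem, ζ, hζ, ?_, mem_closedBall_iff_norm.1 hζmem⟩
  exact image_eq_zero_of_tendsto_newtonStep_iterate (convex_closedBall _ _) hdiff' hLip' hmem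
    (fun k ↦ (hbounds k).1.isInvertible) hζ (hdiff' ζ hζmem).continuousAt

/-- **Kantorovich-type criterion.** Under the classical Kantorovich hypotheses
(bound `B` on the inverse Jacobian at `zhat`, bound `η` on the Newton step at `zhat`,
Lipschitz constant `K` for the Jacobian on a convex open set `D₀`, `BKη ≤ 1/2`, and the
closed `2η`-ball about `zhat` contained in `D₀`), all Newton iterates of `zhat` are defined,
stay in the closed `2η`-ball about `zhat`, and converge to a zero `ζ` of `g` with
`‖ζ − zhat‖ ≤ 2η`. -/
theorem kantorovich_criterion (n : ℕ)
    (g : EuclideanSpace ℂ (Fin n) → EuclideanSpace ℂ (Fin n))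
    (D₀ : Set (EuclideanSpace ℂ (Fin n))) (hopen : IsOpen D₀) (hconv : Convex ℝ D₀)
    (zhat : EuclideanSpace ℂ (Fin n)) (hzhat : zhat ∈ D₀)
    (B K η : ℝ) (hB : 0 < B) (hK : 0 < K) (hη : 0 < η)
    (hdiff : ∀ x ∈ D₀, DifferentiableAt ℂ g x)
    (hinv : jacobianInvertible g zhat)
    (hBbound : ‖(fderiv ℂ g zhat).inverse‖ ≤ B)
    (hηbound : ‖(fderiv ℂ g zhat).inverse (g zhat)‖ ≤ η)
    (hLip : ∀ x ∈ D₀, ∀ y ∈ D₀, ‖fderiv ℂ g x - fderiv ℂ g y‖ ≤ K * ‖x - y‖)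
    (hBKη : B * K * η ≤ 1 / 2)
    (hball : Metric.closedBall zhat (2 * η) ⊆ D₀) :
    (∀ k : ℕ, jacobianInvertible g ((newtonMap g)^[k] zhat)) ∧
    (∀ k : ℕ, (newtonMap g)^[k] zhat ∈ Metric.closedBall zhat (2 * η)) ∧
    ∃ ζ : EuclideanSpace ℂ (Fin n),
      Tendsto (fun k => (newtonMap g)^[k] zhat) atTop (𝓝 ζ) ∧
      g ζ = 0 ∧ ‖ζ - zhat‖ ≤ 2 * η :=
  kantorovich_criterion_general n g D₀ zhat B K η hK hdiff hinv hBbound hηbound hLip hBKη hball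
end

section
/- (Schubert liaison identity as a linear-algebra statement.) Let V be an n-dimensional vector space over a field, with n = m + 2 and m ≥ 2. Let L₁, L₂ ⊆ V be subspaces of dimension m with K := L₁ ∩ L₂ of dimension m − 1 (equivalently L₁ ≠ L₂), and let Λ := L₁ + L₂, which has dimension m + 1. Then for every 2-dimensional subspace H ⊆ V: (H ∩ L₁ ≠ 0 and H ∩ L₂ ≠ 0) if and only if (H ∩ K ≠ 0 or H ⊆ Λ). In other words, the Schubert variety intersection Ω L₁ ∩ Ω L₂ equals Ω K ∪ Ω Λ, where Ω L is the set of 2-planes meeting L nontrivially and Ω Λ the set of 2-planes contained in Λ. -/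
/-- **Schubert liaison identity as a linear-algebra statement.**
Let `V` be an `(m+2)`-dimensional vector space, `m ≥ 2`, and let `L₁ ≠ L₂` be
`m`-dimensional subspaces with `dim (L₁ ⊓ L₂) = m − 1`.  Then a `2`-dimensional subspace
`H` meets both `L₁` and `L₂` nontrivially iff `H` meets `K = L₁ ⊓ L₂` nontrivially or
`H` is contained in `Λ = L₁ ⊔ L₂`. -/
theorem schubert_liaison_identity (F : Type*) [Field F]
    (V : Type*) [AddCommGroup V] [Module F V] [FiniteDimensional F V]
    (m : ℕ) (hm : 2 ≤ m) (hdim : Module.finrank F V = m + 2)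
    (L₁ L₂ : Submodule F V)
    (hL₁ : Module.finrank F L₁ = m) (hL₂ : Module.finrank F L₂ = m)
    (hne : L₁ ≠ L₂)
    (hK : Module.finrank F ↥(L₁ ⊓ L₂) = m - 1)
    (H : Submodule F V) (hH : Module.finrank F H = 2) :
    (H ⊓ L₁ ≠ ⊥ ∧ H ⊓ L₂ ≠ ⊥) ↔ (H ⊓ (L₁ ⊓ L₂) ≠ ⊥ ∨ H ≤ L₁ ⊔ L₂) := by
  have hΛ : Module.finrank F ↥(L₁ ⊔ L₂) = m + 1 := by
    have h := Submodule.finrank_sup_add_finrank_inf_eq L₁ L₂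
    rw [hL₁, hL₂, hK] at h
    omega
  constructor
  · rintro ⟨h1, h2⟩
    by_cases hk : H ⊓ (L₁ ⊓ L₂) = ⊥
    · right
      obtain ⟨v₁, hv₁, hv₁0⟩ := Submodule.exists_mem_ne_zero_of_ne_bot h1
      obtain ⟨v₂, hv₂, hv₂0⟩ := Submodule.exists_mem_ne_zero_of_ne_bot h2
      have hv₁H : v₁ ∈ H := hv₁.1
      have hv₂H : v₂ ∈ H := hv₂.1
      have hind : LinearIndependent F ![v₁, v₂] := by
        rw [LinearIndependent.pair_iff]
        intro s t hst
        have hs : s = 0 := by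
          by_contra hs
          have hsv : s • v₁ = -(t • v₂) := by
            linear_combination (norm := module) hst
          have : v₁ = (-(s⁻¹ * t)) • v₂ := by
            rw [← inv_smul_smul₀ hs v₁, hsv, smul_neg, smul_smul]
            module
          have hv₁L₂ : v₁ ∈ L₂ := this ▸ Submodule.smul_mem _ _ hv₂.2
          have : v₁ ∈ H ⊓ (L₁ ⊓ L₂) := ⟨hv₁H, hv₁.2, hv₁L₂⟩
          rw [hk] at this
          exact hv₁0 this
        refine ⟨hs, ?_⟩
        rw [hs, zero_smul, zero_add] at hst
        exact (smul_eq_zero.mp hst).resolve_right hv₂0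
      have hspan : Submodule.span F {v₁, v₂} = H := by
        apply Submodule.eq_of_le_of_finrank_le
        · rw [Submodule.span_le]
          rintro x (rfl | rfl) <;> assumption
        · rw [hH]
          have := finrank_span_eq_card (R := F) hind
          simp only [Fintype.card_fin] at this
          have hr : Set.range ![v₁, v₂] = {v₁, v₂} := by
            simp [Matrix.range_cons, Matrix.range_empty, Set.insert_union, Set.pair_comm]
          rw [hr] at this
          omega
      rw [← hspan, Submodule.span_le]
      rintro x (rfl | rfl)
      · exact Submodule.mem_sup_left hv₁.2
      · exact Submodule.mem_sup_right hv₂.2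
    · left; exact hk
  · rintro (hk | hle)
    · constructor
      · exact fun hb => hk (le_bot_iff.mp (hb ▸ inf_le_inf_left H inf_le_left))
      · exact fun hb => hk (le_bot_iff.mp (hb ▸ inf_le_inf_left H inf_le_right))
    · have key : ∀ L : Submodule F V, L ≤ L₁ ⊔ L₂ → Module.finrank F L = m →
          H ⊓ L ≠ ⊥ := by
        intro L hLle hLdim hb
        have h := Submodule.finrank_sup_add_finrank_inf_eq H L
        rw [hb, finrank_bot, hH, hLdim] at h
        have hmono : Module.finrank F ↥(H ⊔ L) ≤ m + 1 := by
          rw [← hΛ]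
          exact Submodule.finrank_mono (sup_le hle hLle)
        omega
      exact ⟨key L₁ le_sup_left hL₁, key L₂ le_sup_right hL₂⟩
end

section
/- (Essential matrices satisfy the Demazure cubics.) Let t ∈ ℂ³ and let [t]ₓ be the 3×3 skew-symmetric matrix representing the cross product by t (so [t]ₓ v = t × v for all v ∈ ℂ³). Let R be a 3×3 complex matrix with R·Rᵀ = I and det R = 1, and set E := [t]ₓ · R. Then E satisfies: (i) E·Eᵀ·E − (1/2)·tr(E·Eᵀ)·E = 0 (the Demazure cubics), (ii) det E = 0, and (iii) Eᵀ · t = 0 (t lies in the kernel of Eᵀ). -/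
set_option maxHeartbeats 1000000


open Matrix

lemma cross_matrix_eq (t : Fin 3 → ℂ) (M : Matrix (Fin 3) (Fin 3) ℂ)
    (hM : ∀ v : Fin 3 → ℂ, M.mulVec v = crossProduct t v) :
    M = !![0, -t 2, t 1; t 2, 0, -t 0; -t 1, t 0, 0] := by
  ext i j
  have : M i j = M.mulVec (Pi.single j 1) i := by
    simp [Matrix.mulVec, dotProduct, Pi.single_apply, Finset.sum_ite_eq']
  rw [this, hM]
  fin_cases i <;> fin_cases j <;>
    simp [crossProduct, Pi.single_apply]

/-- **Essential matrices satisfy the Demazure cubics.**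
Let `M = [t]ₓ` be the matrix of the cross product by `t ∈ ℂ³`, let `R` satisfy
`R Rᵀ = 1` and `det R = 1`, and set `E = M R`.  Then `E Eᵀ E − (1/2) tr(E Eᵀ) E = 0`,
`det E = 0`, and `Eᵀ t = 0`. -/
theorem essential_matrix_demazure (t : Fin 3 → ℂ)
    (M R E : Matrix (Fin 3) (Fin 3) ℂ)
    (hM : ∀ v : Fin 3 → ℂ, M.mulVec v = crossProduct t v)
    (hR : R * R.transpose = 1) (hdetR : R.det = 1)
    (hE : E = M * R) :
    E * E.transpose * E - ((1 / 2 : ℂ) * (E * E.transpose).trace) • E = 0 ∧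
    E.det = 0 ∧
    E.transpose.mulVec t = 0 := by
  have hMmat := cross_matrix_eq t M hM
  have hEEt : E * E.transpose = M * M.transpose := by
    rw [hE, Matrix.transpose_mul]
    calc M * R * (R.transpose * M.transpose)
        = M * (R * R.transpose) * M.transpose := by
          simp [Matrix.mul_assoc]
      _ = M * M.transpose := by rw [hR]; simp
  have hT : (!![0, -t 2, t 1; t 2, 0, -t 0; -t 1, t 0, 0] : Matrix (Fin 3) (Fin 3) ℂ).transpose
      = !![0, t 2, -t 1; -t 2, 0, t 0; t 1, -t 0, 0] := by
    ext i j; fin_cases i <;> fin_cases j <;> simp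
  have hdem : M * M.transpose * M - ((1 / 2 : ℂ) * (M * M.transpose).trace) • M = 0 := by
    rw [hMmat, hT]
    simp only [Matrix.mul_fin_three, Matrix.trace_fin_three, Matrix.cons_val', Matrix.cons_val_zero,
      Matrix.cons_val_one, Matrix.head_cons, Matrix.empty_val', Matrix.cons_val_fin_one,
      Matrix.head_fin_const, Matrix.of_apply]
    ext i j
    fin_cases i <;> fin_cases j <;>
      simp <;> ring
  refine ⟨?_, ?_, ?_⟩
  · rw [hEEt, hE]
    calc M * M.transpose * (M * R) - ((1 / 2 : ℂ) * (M * M.transpose).trace) • (M * R)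
        = (M * M.transpose * M - ((1 / 2 : ℂ) * (M * M.transpose).trace) • M) * R := by
          simp [Matrix.sub_mul, Matrix.smul_mul, Matrix.mul_assoc]
      _ = 0 := by rw [hdem]; simp
  · rw [hE, Matrix.det_mul, hdetR, mul_one, hMmat]
    simp [Matrix.det_fin_three]
    ring
  · have hMt : M.mulVec t = 0 := by
      rw [hM t]
      ext i
      fin_cases i <;> simp [crossProduct] <;> ring
    have hskew : M.transpose = -M := by
      rw [hMmat]
      ext i j
      fin_cases i <;> fin_cases j <;> simp
    rw [hE, Matrix.transpose_mul, ← Matrix.mulVec_mulVec, hskew]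
    simp [Matrix.neg_mulVec, hMt]
end

section
/- (Key step in a non-finitely-generated value monoid example.) In the polynomial ring ℂ[z₁, z₂], let L be the ℂ-linear span of {z₁ + z₂, z₁z₂, z₁z₂², 1}. For every n ≥ 1, the monomial z₁z₂ⁿ lies in Lⁿ, the ℂ-linear span of all n-fold products of elements of L (equivalently, the n-th power of the submodule L inside the algebra ℂ[z₁, z₂]). Concretely, this follows from the identity z₁z₂ⁿ = (z₁ + z₂)·(z₁z₂ⁿ⁻¹) − (z₁z₂)·(z₁z₂ⁿ⁻²)·1 for n ≥ 2. -/
open MvPolynomial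

/-- **Key step in a non-finitely-generated value monoid example.**
Let `L ⊆ ℂ[z₁, z₂]` be the span of `{z₁ + z₂, z₁z₂, z₁z₂², 1}`.  Then for every `n ≥ 1`
the monomial `z₁z₂ⁿ` lies in `Lⁿ`; concretely, for `n ≥ 2` one has the identity
`z₁z₂ⁿ = (z₁ + z₂)(z₁z₂ⁿ⁻¹) − (z₁z₂)(z₁z₂ⁿ⁻²)·1`. -/
theorem monomial_in_power_of_span (L : Submodule ℂ (MvPolynomial (Fin 2) ℂ))
    (hL : L = Submodule.span ℂ
      ({X 0 + X 1, X 0 * X 1, X 0 * X 1 ^ 2, 1} : Set (MvPolynomial (Fin 2) ℂ))) :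
    (∀ n : ℕ, 1 ≤ n → (X 0 * X 1 ^ n : MvPolynomial (Fin 2) ℂ) ∈ L ^ n) ∧
    (∀ n : ℕ, 2 ≤ n → (X 0 * X 1 ^ n : MvPolynomial (Fin 2) ℂ) =
      (X 0 + X 1) * (X 0 * X 1 ^ (n - 1)) - (X 0 * X 1) * (X 0 * X 1 ^ (n - 2)) * 1) := by
  have h1 : (X 0 + X 1 : MvPolynomial (Fin 2) ℂ) ∈ L := by
    rw [hL]; exact Submodule.subset_span (by simp)
  have h2 : (X 0 * X 1 : MvPolynomial (Fin 2) ℂ) ∈ L := by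
    rw [hL]; exact Submodule.subset_span (by simp)
  have h3 : (X 0 * X 1 ^ 2 : MvPolynomial (Fin 2) ℂ) ∈ L := by
    rw [hL]; exact Submodule.subset_span (by simp)
  have h4 : (1 : MvPolynomial (Fin 2) ℂ) ∈ L := by
    rw [hL]; exact Submodule.subset_span (by simp)
  have key : ∀ m : ℕ, (X 0 * X 1 ^ (m + 1) : MvPolynomial (Fin 2) ℂ) ∈ L ^ (m + 1) ∧
      (X 0 * X 1 ^ (m + 2) : MvPolynomial (Fin 2) ℂ) ∈ L ^ (m + 2) := by
    intro m
    induction m with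
    | zero =>
      constructor
      · simpa [pow_one] using h2
      · have : (X 0 * X 1 ^ 2 : MvPolynomial (Fin 2) ℂ) = (X 0 * X 1 ^ 2) * 1 := by ring
        rw [show (0 + 2 : ℕ) = 2 from rfl, sq L, this]
        exact Submodule.mul_mem_mul h3 h4
    | succ m ih =>
      refine ⟨ih.2, ?_⟩
      have eqn : (X 0 * X 1 ^ (m + 3) : MvPolynomial (Fin 2) ℂ) =
          (X 0 + X 1) * (X 0 * X 1 ^ (m + 2)) -
            (X 0 * X 1) * ((X 0 * X 1 ^ (m + 1)) * 1) := by ring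
      rw [show m + 1 + 2 = m + 3 from rfl, eqn]
      refine sub_mem ?_ ?_
      · rw [show m + 3 = 1 + (m + 2) from by ring, pow_add, pow_one]
        exact Submodule.mul_mem_mul h1 ih.2
      · rw [show m + 3 = 1 + ((m + 1) + 1) from by ring, pow_add, pow_one, pow_succ]
        exact Submodule.mul_mem_mul h2 (Submodule.mul_mem_mul ih.1 h4)
  constructor
  · intro n hn
    obtain ⟨m, rfl⟩ := Nat.exists_eq_add_of_le hn
    simpa [add_comm] using (key m).1
  · intro n hn
    obtain ⟨m, rfl⟩ := Nat.exists_eq_add_of_le hn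
    have e1 : 2 + m - 1 = m + 1 := by omega
    have e2 : 2 + m - 2 = m := by omega
    rw [e1, e2, show 2 + m = m + 2 from by ring]
    ring
end
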